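/- arXiv:1104.0279 — 4 statements merged into one kernel-verified Lean document; each statement's English description precedes it below -/
import Mathlib

section
/- On the cycle graph C_3, the number of configurations debt-reachable from (c,0,0) equals (3k^2+3k+2)/2 if c=3k, (3k^2+5k+2)/2 if c=3k+1, and (3k^2+7k+4)/2 if c=3k+2. -/
/-- The set of configurations on the triangle `C_3` that are debt-reachable from the
configuration with `c` chips on vertex `0` and none elsewhere: the difference lies in
the integer image of the Laplacian of `C_3`. -/
def debtReachableFromC3 (c : ℕ) : Set (Fin 3 → ℕ) :=
  {C' | ∃ x : Fin 3 → ℤ,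
    ((SimpleGraph.cycleGraph 3).lapMatrix ℤ).mulVec x =
      (fun i => (C' i : ℤ)) - (fun i => if i = 0 then (c : ℤ) else 0)}

private def pairFinset (c : ℕ) : Finset (ℕ × ℕ) :=
  (Finset.range (c+1) ×ˢ Finset.range (c+1)).filter
    (fun p => p.1 + p.2 ≤ c ∧ p.1 % 3 = p.2 % 3)

private def Ncnt (s : ℕ) : ℕ :=
  ((Finset.range (s+1)).filter (fun b => (2*b) % 3 = s % 3)).card

private lemma N_step (s : ℕ) : Ncnt (s+3) = Ncnt s + 1 := by
  have h3 : (s+3) % 3 = s % 3 := by omega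
  unfold Ncnt
  rw [h3]
  rw [show s+3+1 = (s+2+1)+1 from rfl, Finset.range_add_one, Finset.filter_insert,
    show s+2+1 = (s+1+1)+1 from rfl, Finset.range_add_one, Finset.filter_insert,
    show s+1+1 = (s+1)+1 from rfl, Finset.range_add_one, Finset.filter_insert]
  have hsub : ∀ t : ℕ, s < t →
      t ∉ (Finset.range (s+1)).filter (fun b => (2*b) % 3 = s % 3) := by
    intro t ht hmem
    simp only [Finset.mem_filter, Finset.mem_range] at hmem
    omega
  rcases (show s % 3 = 0 ∨ s % 3 = 1 ∨ s % 3 = 2 by omega) with h | h | h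
  · rw [if_pos (by omega), if_neg (by omega), if_neg (by omega),
      Finset.card_insert_of_notMem (hsub _ (by omega))]
  · rw [if_neg (by omega), if_neg (by omega), if_pos (by omega),
      Finset.card_insert_of_notMem (hsub _ (by omega))]
  · rw [if_neg (by omega), if_pos (by omega), if_neg (by omega),
      Finset.card_insert_of_notMem (hsub _ (by omega))]

private lemma N_sum (s : ℕ) : Ncnt s + Ncnt (s+1) + Ncnt (s+2) = s + 2 := by
  induction s with
  | zero => decide
  | succ n ih =>
    have h := N_step n
    rw [show n+1+1 = n+2 from rfl, show n+1+2 = n+3 from rfl]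
    omega

private lemma pair_step (c : ℕ) :
    (pairFinset (c+1)).card = (pairFinset c).card + Ncnt (c+1) := by
  classical
  have hset : pairFinset (c+1) =
      pairFinset c ∪ ((Finset.range (c+2)).filter (fun b => (2*b) % 3 = (c+1) % 3)).image
        (fun b => (b, c+1-b)) := by
    ext p
    simp only [pairFinset, Finset.mem_filter, Finset.mem_product, Finset.mem_range,
      Finset.mem_union, Finset.mem_image, Prod.ext_iff]
    constructor
    · rintro ⟨⟨h1, h2⟩, h3, h4⟩
      by_cases h : p.1 + p.2 ≤ c
      · exact Or.inl ⟨⟨by omega, by omega⟩, h, h4⟩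
      · refine Or.inr ⟨p.1, ⟨by omega, by omega⟩, by omega, by omega⟩
    · rintro (⟨⟨h1, h2⟩, h3, h4⟩ | ⟨b, ⟨hb, hb2⟩, hb3, hb4⟩)
      · exact ⟨⟨by omega, by omega⟩, by omega, h4⟩
      · refine ⟨⟨by omega, by omega⟩, by omega, by omega⟩
  have hdisj : Disjoint (pairFinset c)
      (((Finset.range (c+2)).filter (fun b => (2*b) % 3 = (c+1) % 3)).image
        (fun b => (b, c+1-b))) := by
    rw [Finset.disjoint_right]
    rintro p hq hp
    simp only [pairFinset, Finset.mem_filter, Finset.mem_product, Finset.mem_range] at hp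
    simp only [Finset.mem_filter, Finset.mem_range, Finset.mem_image] at hq
    obtain ⟨b, ⟨hb, _⟩, rfl⟩ := hq
    omega
  have hinj : Set.InjOn (fun b => (b, c+1-b))
      ((Finset.range (c+2)).filter (fun b => (2*b) % 3 = (c+1) % 3)) := by
    intro a _ b _ h
    exact congrArg Prod.fst h
  rw [hset, Finset.card_union_of_disjoint hdisj, Finset.card_image_of_injOn hinj, Ncnt]

private lemma pair_step3 (c : ℕ) :
    (pairFinset (c+3)).card = (pairFinset c).card + (c+3) := by
  have h1 := pair_step c
  have h2 := pair_step (c+1)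
  have h3 := pair_step (c+2)
  have h4 := N_sum (c+1)
  rw [show c+1+1 = c+2 from rfl] at h2
  rw [show c+2+1 = c+3 from rfl] at h3
  rw [show c+1+1 = c+2 from rfl, show c+1+2 = c+3 from rfl] at h4
  omega

private lemma pair_card (k : ℕ) :
    2 * (pairFinset (3*k)).card = 3*k^2 + 3*k + 2 ∧
    2 * (pairFinset (3*k+1)).card = 3*k^2 + 5*k + 2 ∧
    2 * (pairFinset (3*k+2)).card = 3*k^2 + 7*k + 4 := by
  induction k with
  | zero => refine ⟨?_, ?_, ?_⟩ <;> decide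
  | succ n ih =>
    obtain ⟨i1, i2, i3⟩ := ih
    have s1 := pair_step3 (3*n)
    have s2 := pair_step3 (3*n+1)
    have s3 := pair_step3 (3*n+2)
    have esq : 3*(n+1)^2 = 3*n^2 + 6*n + 3 := by ring
    refine ⟨?_, ?_, ?_⟩
    · rw [show 3*(n+1) = 3*n+3 from by ring, esq]; omega
    · rw [show 3*(n+1)+1 = (3*n+1)+3 from by ring, esq]; omega
    · rw [show 3*(n+1)+2 = (3*n+2)+3 from by ring, esq]; omega

private lemma lap_mulVec (x : Fin 3 → ℤ) :
    ((SimpleGraph.cycleGraph 3).lapMatrix ℤ).mulVec x =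
      ![2*x 0 - x 1 - x 2, 2*x 1 - x 0 - x 2, 2*x 2 - x 0 - x 1] := by
  have hdeg : ∀ i, (SimpleGraph.cycleGraph 3).degree i = 2 := by decide
  funext i
  fin_cases i <;>
    simp [SimpleGraph.lapMatrix, Matrix.mulVec, dotProduct, Fin.sum_univ_three,
      SimpleGraph.degMatrix, hdeg, SimpleGraph.cycleGraph_three_eq_top] <;> ring

private lemma mem_debtReachable (c : ℕ) (f : Fin 3 → ℕ) :
    f ∈ debtReachableFromC3 c ↔ f 0 + f 1 + f 2 = c ∧ f 1 % 3 = f 2 % 3 := by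
  constructor
  · rintro ⟨x, hx⟩
    rw [lap_mulVec] at hx
    have h0 := congrFun hx 0
    have h1 := congrFun hx 1
    have h2 := congrFun hx 2
    simp [Pi.sub_apply] at h0 h1 h2
    omega
  · rintro ⟨hsum, hmod⟩
    have hdvd : (3:ℤ) ∣ ((f 0 : ℤ) - c - f 1) := by omega
    obtain ⟨t, ht⟩ := hdvd
    refine ⟨![2*t + f 1, t + f 1, 0], ?_⟩
    rw [lap_mulVec]
    funext i
    fin_cases i <;> simp [Pi.sub_apply] <;> omega

private lemma ncard_eq_pair (c : ℕ) :
    (debtReachableFromC3 c).ncard = (pairFinset c).card := by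
  classical
  have hset : debtReachableFromC3 c =
      ↑((pairFinset c).image (fun p => ![c - p.1 - p.2, p.1, p.2])) := by
    ext f
    rw [mem_debtReachable]
    simp only [Finset.coe_image, Set.mem_image, Finset.mem_coe, pairFinset,
      Finset.mem_filter, Finset.mem_product, Finset.mem_range]
    constructor
    · rintro ⟨hsum, hmod⟩
      refine ⟨(f 1, f 2), ⟨⟨by omega, by omega⟩, by omega, hmod⟩, ?_⟩
      funext i
      fin_cases i <;> simp <;> omega
    · rintro ⟨p, ⟨⟨h1, h2⟩, h3, h4⟩, rfl⟩
      simp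
      omega
  rw [hset, Set.ncard_coe_finset]
  apply Finset.card_image_of_injOn
  intro p _ q _ h
  have h1 := congrFun h 1
  have h2 := congrFun h 2
  simp at h1 h2
  exact Prod.ext h1 h2

/-- On `C_3`, the number of configurations debt-reachable from `(c,0,0)` equals
`(3k²+3k+2)/2` if `c = 3k`, `(3k²+5k+2)/2` if `c = 3k+1`, and `(3k²+7k+4)/2` if
`c = 3k+2`. -/
theorem card_debtReachable_C3 (c k : ℕ) :
    (c = 3 * k → (debtReachableFromC3 c).ncard = (3 * k ^ 2 + 3 * k + 2) / 2) ∧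
    (c = 3 * k + 1 → (debtReachableFromC3 c).ncard = (3 * k ^ 2 + 5 * k + 2) / 2) ∧
    (c = 3 * k + 2 → (debtReachableFromC3 c).ncard = (3 * k ^ 2 + 7 * k + 4) / 2) := by
  obtain ⟨h1, h2, h3⟩ := pair_card k
  refine ⟨fun hc => ?_, fun hc => ?_, fun hc => ?_⟩ <;>
    (subst hc; rw [ncard_eq_pair]) <;>
    (generalize hm : k^2 = m at *; omega)
end

section
/- On C_3, the number of lattice points (x_2,x_3) in Z^2 satisfying x_2 + x_3 >= -c, x_3 - 2x_2 >= 0, and x_2 - 2x_3 >= 0 equals (3k^2+3k+2)/2 when c = 3k. -/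
/-- The slice Finset of points with coordinate sum `-t`. -/
noncomputable def C3slice (t : ℕ) : Finset (ℤ × ℤ) :=
  (Finset.Icc (-(((2 * t : ℕ) : ℤ) / 3)) ((-(t : ℤ)) / 3)).image (fun x => (x, -(t : ℤ) - x))

lemma C3slice_card (t : ℕ) :
    (C3slice t).card = ((-(t : ℤ)) / 3 + 1 + ((2 * t : ℕ) : ℤ) / 3).toNat := by
  unfold C3slice
  rw [Finset.card_image_of_injective _ (fun a b h => by simpa using congrArg Prod.fst h),
    Int.card_Icc]
  ring_nf

noncomputable def C3F (k : ℕ) : Finset (ℤ × ℤ) := (Finset.range (3 * k + 1)).biUnion C3slice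

lemma C3F_card (k : ℕ) : (C3F k).card = (3 * k ^ 2 + 3 * k + 2) / 2 := by
  unfold C3F
  rw [Finset.card_biUnion]
  · induction k with
    | zero =>
      simp [C3slice_card]
    | succ k ih =>
      have h3 : 3 * (k + 1) + 1 = (3 * k + 1) + 1 + 1 + 1 := by ring
      rw [h3, Finset.sum_range_succ, Finset.sum_range_succ, Finset.sum_range_succ, ih,
        C3slice_card, C3slice_card, C3slice_card]
      have h1 : (k+1)^2 = k^2 + 2*k + 1 := by ring
      push_cast
      omega
  · intro a _ b _ hab
    simp only [Finset.disjoint_left, C3slice, Finset.mem_image, Finset.mem_Icc]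
    rintro ⟨x, y⟩ ⟨u, _, hu⟩ ⟨v, _, hv⟩
    have h1 := congrArg Prod.fst hu
    have h2 := congrArg Prod.snd hu
    have h3 := congrArg Prod.fst hv
    have h4 := congrArg Prod.snd hv
    simp at h1 h2 h3 h4
    omega

/-- The number of lattice points `(x₂, x₃) ∈ ℤ²` satisfying `x₂ + x₃ ≥ -c`,
`x₃ - 2x₂ ≥ 0` and `x₂ - 2x₃ ≥ 0` equals `(3k²+3k+2)/2` when `c = 3k`. -/
theorem card_lattice_points_C3_triangle (c k : ℕ) (hc : c = 3 * k) :
    {p : ℤ × ℤ | -(c : ℤ) ≤ p.1 + p.2 ∧ 0 ≤ p.2 - 2 * p.1 ∧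
      0 ≤ p.1 - 2 * p.2}.ncard = (3 * k ^ 2 + 3 * k + 2) / 2 := by
  subst hc
  have hset : {p : ℤ × ℤ | -((3 * k : ℕ) : ℤ) ≤ p.1 + p.2 ∧ 0 ≤ p.2 - 2 * p.1 ∧
      0 ≤ p.1 - 2 * p.2} = ↑(C3F k) := by
    ext ⟨x, y⟩
    rw [Set.mem_setOf_eq, Finset.mem_coe]
    simp only [C3F, C3slice, Finset.mem_biUnion, Finset.mem_range, Finset.mem_image,
      Finset.mem_Icc]
    constructor
    · rintro ⟨h1, h2, h3⟩
      refine ⟨(-(x + y)).toNat, by omega, x, by push_cast; omega, ?_⟩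
      simp only [Prod.mk.injEq, true_and]
      omega
    · rintro ⟨t, ht, u, ⟨hu1, hu2⟩, huv⟩
      have h1 := congrArg Prod.fst huv
      have h2 := congrArg Prod.snd huv
      simp at h1 h2
      push_cast at hu1 hu2 ⊢
      omega
  rw [hset, Set.ncard_coe_finset, C3F_card]
end

section
/- On C_n, there exists a pair of distinct indices i != j such that c·e_i is debt-reachable from c·e_j if and only if gcd(c, n) > 1. -/
private lemma modEval {n a b : ℕ} (hb : b < n) (h : a = n + b) : a % n = b := by
  subst h; rw [Nat.add_mod_left, Nat.mod_eq_of_lt hb]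

private lemma modEval' {n a b : ℕ} (h1 : a = b) (h2 : b < n) : a % n = b := by
  subst h1; exact Nat.mod_eq_of_lt h2

open Matrix

private lemma cycle_lap_apply (m : ℕ) (x : Fin (m+3) → ℤ) (v : Fin (m+3)) :
    ((SimpleGraph.cycleGraph (m+3)).lapMatrix ℤ).mulVec x v = 2 * x v - x (v-1) - x (v+1) := by
  have h : v - 1 ≠ v + 1 := by
    intro h
    have h1 := congrArg (· + 1) h
    simp only [sub_add_cancel] at h1
    have h3 : v = v + 2 := by
      conv_lhs => rw [h1]
      rw [add_assoc]; rfl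
    have hv := congrArg Fin.val (left_eq_add.mp h3)
    simp [Fin.val_two] at hv
    rw [Nat.mod_eq_of_lt (show 2 < m+3 by omega)] at hv; omega
  rw [SimpleGraph.lapMatrix_mulVec_apply, SimpleGraph.cycleGraph_degree_three_le,
    SimpleGraph.cycleGraph_neighborFinset, Finset.sum_pair h, sub_add_eq_sub_sub]
  push_cast
  ring

private lemma val_add_one (m : ℕ) (v : Fin (m+3)) : (v+1).val = (v.val + 1) % (m+3) := by
  simp [Fin.add_def]

private lemma val_sub_one (m : ℕ) (v : Fin (m+3)) : (v-1).val = (v.val + (m+2)) % (m+3) := by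
  simp [Fin.sub_def, Nat.add_comm]

/-- On the cycle `C_n` (`n ≥ 3`), there exists a pair of distinct vertices `i ≠ j` such
that `c·e_i` is debt-reachable from `c·e_j` if and only if `gcd(c, n) > 1`. -/
theorem cycle_scaled_single_chip_debtReachable_iff (n : ℕ) (hn : 3 ≤ n) (c : ℕ) :
    (∃ i j : Fin n, i ≠ j ∧
      ∃ x : Fin n → ℤ, ((SimpleGraph.cycleGraph n).lapMatrix ℤ).mulVec x =
        (Pi.single i (c : ℤ) : Fin n → ℤ) - Pi.single j (c : ℤ)) ↔
    1 < Nat.gcd c n := by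
  obtain ⟨m, rfl⟩ : ∃ m, n = m + 3 := ⟨n - 3, by omega⟩
  set L := (SimpleGraph.cycleGraph (m+3)).lapMatrix ℤ with hL
  constructor
  · rintro ⟨i, j, hij, x, hx⟩
    by_contra hgcd
    have hg1 : Nat.gcd c (m+3) = 1 := by
      have := Nat.gcd_pos_of_pos_right c (show 0 < m+3 by omega)
      omega
    set g : Fin (m+3) → ℤ := fun k => (k.val : ℤ) with hgdef
    set z : Fin (m+3) := ⟨m+2, by omega⟩ with hz
    have hLg : L.mulVec g =
        Pi.single (0 : Fin (m+3)) (-((m:ℤ)+3)) + Pi.single z ((m:ℤ)+3) := by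
      funext k
      rw [hL, cycle_lap_apply]
      have hs := val_sub_one m k
      have ha := val_add_one m k
      have hklt := k.isLt
      simp only [hgdef, Pi.add_apply, Pi.single_apply]
      rcases Nat.lt_or_ge k.val 1 with hk | hk
      · have hk0 : k.val = 0 := by omega
        have c1 : k = (0 : Fin (m+3)) := Fin.ext (by rw [Fin.val_zero]; omega)
        have c2 : k ≠ z := Fin.ne_of_val_ne (show k.val ≠ m+2 by omega)
        have e1 : (k - 1).val = m + 2 := by rw [hs, hk0]; exact modEval' (by omega) (by omega)
        have e2 : (k + 1).val = 1 := by rw [ha, hk0]; exact modEval' (by omega) (by omega)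
        rw [e1, e2, if_pos c1, if_neg c2]
        push_cast [hk0]; ring
      rcases Nat.lt_or_ge k.val (m+2) with hk2 | hk2
      · have c1 : k ≠ (0 : Fin (m+3)) := Fin.ne_of_val_ne (by rw [Fin.val_zero]; omega)
        have c2 : k ≠ z := Fin.ne_of_val_ne (show k.val ≠ m+2 by omega)
        have e1 : (k - 1).val = k.val - 1 := by rw [hs]; exact modEval (by omega) (by omega)
        have e2 : (k + 1).val = k.val + 1 := by rw [ha]; exact modEval' (by omega) (by omega)
        rw [e1, e2, if_neg c1, if_neg c2]
        omega
      · have hk3 : k.val = m + 2 := by omega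
        have c1 : k ≠ (0 : Fin (m+3)) := Fin.ne_of_val_ne (by rw [Fin.val_zero]; omega)
        have c2 : k = z := Fin.ext (show k.val = m+2 from hk3)
        have e1 : (k - 1).val = m + 1 := by rw [hs, hk3]; exact modEval (by omega) (by omega)
        have e2 : (k + 1).val = 0 := by rw [ha, hk3]; exact modEval (by omega) (by omega)
        rw [e1, e2, if_neg c1, if_pos c2]
        push_cast [hk3]; ring
    have hvm : g ᵥ* L = L.mulVec g := by
      have hsym : Lᵀ = L := (SimpleGraph.isSymm_lapMatrix ℤ _).eq
      nth_rewrite 1 [← hsym]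
      rw [Matrix.vecMul_transpose]
    have hswap : g ⬝ᵥ (L.mulVec x) = ((m:ℤ)+3) * x z - ((m:ℤ)+3) * x 0 := by
      rw [Matrix.dotProduct_mulVec, hvm, hLg]
      simp [dotProduct, Pi.add_apply, Pi.single_apply, add_mul, ite_mul,
        Finset.sum_add_distrib, Finset.sum_ite_eq']
      ring
    have hrhs : g ⬝ᵥ ((Pi.single i (c:ℤ) : Fin (m+3) → ℤ) - Pi.single j (c:ℤ))
        = (c:ℤ) * (i.val:ℤ) - (c:ℤ) * (j.val:ℤ) := by
      simp [dotProduct, Pi.sub_apply, Pi.single_apply, mul_sub, mul_ite,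
        Finset.sum_sub_distrib, Finset.sum_ite_eq', hgdef]
      ring
    have hchain : (c:ℤ) * (i.val:ℤ) - (c:ℤ) * (j.val:ℤ)
        = ((m:ℤ)+3) * x z - ((m:ℤ)+3) * x 0 := by
      rw [← hrhs, ← hx, hswap]
    have hdvd : ((m:ℤ)+3) ∣ (c:ℤ) * ((i.val:ℤ) - (j.val:ℤ)) :=
      ⟨x z - x 0, by linarith⟩
    have hco : IsCoprime ((m:ℤ)+3) (c:ℤ) := by
      have h2 : IsCoprime (((m+3:ℕ)):ℤ) ((c:ℕ):ℤ) := by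
        rw [Int.isCoprime_iff_gcd_eq_one, Int.gcd_natCast_natCast, Nat.gcd_comm]
        exact hg1
      push_cast at h2; exact h2
    have hdvd2 : ((m:ℤ)+3) ∣ ((i.val:ℤ) - (j.val:ℤ)) := hco.dvd_of_dvd_mul_left hdvd
    have h0 : (i.val:ℤ) - (j.val:ℤ) = 0 := by
      refine Int.eq_zero_of_abs_lt_dvd hdvd2 ?_
      have hi := i.isLt; have hj := j.isLt
      rw [abs_lt]
      constructor <;> omega
    exact hij (Fin.ext (by omega))
  · intro hd
    have hdn : Nat.gcd c (m+3) ∣ (m+3) := Nat.gcd_dvd_right _ _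
    have hdc : Nat.gcd c (m+3) ∣ c := Nat.gcd_dvd_left _ _
    obtain ⟨M, hM⟩ := hdn
    obtain ⟨T, hT⟩ := hdc
    set d := Nat.gcd c (m+3) with hdd
    have hM1 : 1 ≤ M := by
      rcases Nat.eq_zero_or_pos M with h | h
      · rw [h, Nat.mul_zero] at hM; omega
      · exact h
    have hMle : M ≤ m + 1 := by
      have h2 : M + 2 ≤ d * M := by
        rcases Nat.lt_or_ge M 2 with h2 | h2
        · have hM1' : M = 1 := by omega
          rw [hM1'] at hM ⊢
          omega
        · have h3 := Nat.mul_le_mul_right M (show 2 ≤ d from hd)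
          linarith
      have h3 : M + 2 ≤ m + 3 := hM ▸ h2
      omega
    have hkey : (c:ℤ) * (M:ℤ) = (T:ℤ) * ((m:ℤ)+3) := by
      have h1 : (c:ℤ) = (d:ℤ) * T := by exact_mod_cast hT
      have h2 : ((m:ℤ)+3) = (d:ℤ) * M := by exact_mod_cast hM
      rw [h1, h2]; ring
    refine ⟨⟨M, by omega⟩, ⟨0, by omega⟩, Fin.ne_of_val_ne (show M ≠ 0 by omega),
      fun k => (c:ℤ) * min (k.val:ℤ) (M:ℤ) - (T:ℤ) * (k.val:ℤ), ?_⟩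
    funext v
    rw [hL, cycle_lap_apply]
    have hs := val_sub_one m v
    have ha := val_add_one m v
    have hvlt := v.isLt
    simp only [Pi.sub_apply, Pi.single_apply]
    rcases Nat.lt_or_ge v.val 1 with hv | hv
    · have hv0 : v.val = 0 := by omega
      have c1 : v ≠ (⟨M, by omega⟩ : Fin (m+3)) := Fin.ne_of_val_ne (show v.val ≠ M by omega)
      have c2 : v = (⟨0, by omega⟩ : Fin (m+3)) := Fin.ext (show v.val = 0 from hv0)
      have e1 : (v - 1).val = m + 2 := by rw [hs, hv0]; exact modEval' (by omega) (by omega)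
      have e2 : (v + 1).val = 1 := by rw [ha, hv0]; exact modEval' (by omega) (by omega)
      rw [e1, e2, hv0, if_neg c1, if_pos c2]
      rw [min_eq_right (by push_cast; omega : ((M:ℤ) ≤ ((m+2:ℕ):ℤ))),
        min_eq_left (by push_cast; omega : ((0:ℕ):ℤ) ≤ (M:ℤ)),
        min_eq_left (by push_cast; omega : ((1:ℕ):ℤ) ≤ (M:ℤ))]
      push_cast
      linarith
    rcases Nat.lt_or_ge v.val (m+2) with hv2 | hv2
    · have c2 : v ≠ (⟨0, by omega⟩ : Fin (m+3)) := Fin.ne_of_val_ne (show v.val ≠ 0 by omega)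
      have e1 : (v - 1).val = v.val - 1 := by rw [hs]; exact modEval (by omega) (by omega)
      have e2 : (v + 1).val = v.val + 1 := by rw [ha]; exact modEval' (by omega) (by omega)
      have hc1 : ((v.val - 1 : ℕ) : ℤ) = (v.val:ℤ) - 1 := by omega
      rw [e1, e2, hc1, if_neg c2]
      rcases lt_trichotomy v.val M with hvM | hvM | hvM
      · have c1 : v ≠ (⟨M, by omega⟩ : Fin (m+3)) := Fin.ne_of_val_ne (show v.val ≠ M by omega)
        rw [if_neg c1, min_eq_left (by omega : (v.val:ℤ) ≤ (M:ℤ)),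
          min_eq_left (by omega : (v.val:ℤ) - 1 ≤ (M:ℤ)),
          min_eq_left (by push_cast; omega : ((v.val+1:ℕ):ℤ) ≤ (M:ℤ))]
        push_cast; ring
      · have c1 : v = (⟨M, by omega⟩ : Fin (m+3)) := Fin.ext (show v.val = M from hvM)
        rw [if_pos c1, min_eq_left (by omega : (v.val:ℤ) ≤ (M:ℤ)),
          min_eq_left (by omega : (v.val:ℤ) - 1 ≤ (M:ℤ)),
          min_eq_right (by push_cast; omega : (M:ℤ) ≤ ((v.val+1:ℕ):ℤ))]
        push_cast [hvM]; ring
      · have c1 : v ≠ (⟨M, by omega⟩ : Fin (m+3)) := Fin.ne_of_val_ne (show v.val ≠ M by omega)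
        rw [if_neg c1, min_eq_right (by omega : (M:ℤ) ≤ (v.val:ℤ)),
          min_eq_right (by omega : (M:ℤ) ≤ (v.val:ℤ) - 1),
          min_eq_right (by push_cast; omega : (M:ℤ) ≤ ((v.val+1:ℕ):ℤ))]
        push_cast; ring
    · have hv3 : v.val = m + 2 := by omega
      have c1 : v ≠ (⟨M, by omega⟩ : Fin (m+3)) := Fin.ne_of_val_ne (show v.val ≠ M by omega)
      have c2 : v ≠ (⟨0, by omega⟩ : Fin (m+3)) := Fin.ne_of_val_ne (show v.val ≠ 0 by omega)
      have e1 : (v - 1).val = m + 1 := by rw [hs, hv3]; exact modEval (by omega) (by omega)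
      have e2 : (v + 1).val = 0 := by rw [ha, hv3]; exact modEval (by omega) (by omega)
      rw [e1, e2, hv3, if_neg c1, if_neg c2,
        min_eq_right (by push_cast; omega : (M:ℤ) ≤ ((m+2:ℕ):ℤ)),
        min_eq_right (by push_cast; omega : (M:ℤ) ≤ ((m+1:ℕ):ℤ)),
        min_eq_left (by push_cast; omega : ((0:ℕ):ℤ) ≤ (M:ℤ))]
      push_cast
      linarith
end

section
/- If (c_1,...,c_n) is debt-reachable from (c'_1,...,c'_n), then (c_1+d_1,...,c_n+d_n) is reachable (via legal firings only) from (c'_1+d_1,...,c'_n+d_n), where d_i is the degree of vertex i. -/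
/-- A legal chip-firing move on the graph `G`: vertex `i` may fire only if it carries at
least its degree in chips; firing sends `C` to `C - L e_i`. -/
def LegalStep {n : ℕ} (G : SimpleGraph (Fin n)) [DecidableRel G.Adj]
    (C D : Fin n → ℤ) : Prop :=
  ∃ i : Fin n, (G.degree i : ℤ) ≤ C i ∧
    D = C - (G.lapMatrix ℤ).mulVec (Pi.single i 1)

lemma key_reach {n : ℕ} (G : SimpleGraph (Fin n)) [DecidableRel G.Adj]
    (B : Fin n → ℤ) (hB : ∀ i, (G.degree i : ℤ) ≤ B i) :
    ∀ N : ℕ, ∀ z : Fin n → ℤ, (∀ i, 0 ≤ z i) → (∑ i, z i).toNat = N →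
      Relation.ReflTransGen (LegalStep G) (B + (G.lapMatrix ℤ).mulVec z) B := by
  intro N
  induction N using Nat.strong_induction_on with
  | _ N ih =>
    intro z hz hsum
    rcases eq_or_ne N 0 with h0 | h0
    · -- sum is zero, so z = 0
      have hz0 : z = 0 := by
        funext i
        have hle : ∑ j, z j ≤ 0 := by
          rw [h0] at hsum
          exact Int.toNat_eq_zero.mp hsum
        have := Finset.sum_eq_zero_iff_of_nonneg (fun j _ => hz j) |>.mp
          (le_antisymm hle (Finset.sum_nonneg fun j _ => hz j)) i (Finset.mem_univ i)
        simpa using this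
      subst hz0
      simp only [Matrix.mulVec_zero, add_zero]
      exact Relation.ReflTransGen.refl
    · -- pick i maximizing z
      have hn : (Finset.univ : Finset (Fin n)).Nonempty := by
        by_contra hne
        rw [Finset.not_nonempty_iff_eq_empty] at hne
        rw [hne] at hsum
        simp at hsum
        omega
      obtain ⟨i, -, hi⟩ := Finset.exists_max_image Finset.univ z hn
      have hzi : 1 ≤ z i := by
        by_contra hlt
        push_neg at hlt
        have hzi0 : z i = 0 := le_antisymm (by omega) (hz i)
        have : ∀ j ∈ Finset.univ, z j = 0 := fun j _ =>
          le_antisymm (by have := hi j (Finset.mem_univ j); omega) (hz j)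
        have : ∑ j, z j = 0 := Finset.sum_eq_zero this
        rw [this] at hsum
        simp at hsum
        omega
      -- L z at i is nonneg
      have hLz : 0 ≤ ((G.lapMatrix ℤ).mulVec z) i := by
        rw [SimpleGraph.lapMatrix_mulVec_apply]
        have hsumle : ∑ u ∈ G.neighborFinset i, z u ≤ ∑ u ∈ G.neighborFinset i, z i :=
          Finset.sum_le_sum fun u _ => hi u (Finset.mem_univ u)
        have : ∑ u ∈ G.neighborFinset i, z i = (G.degree i : ℤ) * z i := by
          rw [Finset.sum_const, SimpleGraph.degree]
          simp [mul_comm]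
        omega
      set z' : Fin n → ℤ := z - Pi.single i 1 with hz'
      have hz'nonneg : ∀ j, 0 ≤ z' j := by
        intro j
        rcases eq_or_ne j i with rfl | hji
        · simp [hz', Pi.single_apply]; omega
        · simp [hz', Pi.single_apply, hji]
          exact hz j
      have hsum' : (∑ j, z' j).toNat = N - 1 := by
        have : ∑ j, z' j = (∑ j, z j) - 1 := by
          simp [hz', Finset.sum_sub_distrib]
        rw [this]
        have hpos : 1 ≤ ∑ j, z j := le_trans hzi
          (Finset.single_le_sum (fun j _ => hz j) (Finset.mem_univ i))
        omega
      have hstep : LegalStep G (B + (G.lapMatrix ℤ).mulVec z)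
          (B + (G.lapMatrix ℤ).mulVec z') := by
        refine ⟨i, ?_, ?_⟩
        · have := hB i
          have : (G.degree i : ℤ) ≤ B i + ((G.lapMatrix ℤ).mulVec z) i := by omega
          simpa using this
        · rw [hz', Matrix.mulVec_sub]
          abel
      exact Relation.ReflTransGen.head hstep
        (ih (N - 1) (by omega) z' hz'nonneg hsum')

/-- If the configuration `(c₁,…,c_n)` is debt-reachable from `(c'₁,…,c'_n)`, then
`(c₁+d₁,…,c_n+d_n)` is reachable via legal firings only from `(c'₁+d₁,…,c'_n+d_n)`,
where `dᵢ` is the degree of vertex `i`. -/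
theorem debtReachable_add_degrees_reachable {n : ℕ} (G : SimpleGraph (Fin n))
    [DecidableRel G.Adj] (C C' : Fin n → ℤ) (hC : ∀ i, 0 ≤ C i) (hC' : ∀ i, 0 ≤ C' i)
    (hdebt : ∃ x : Fin n → ℤ, (G.lapMatrix ℤ).mulVec x = C - C') :
    Relation.ReflTransGen (LegalStep G)
      (fun i => C' i + (G.degree i : ℤ)) (fun i => C i + (G.degree i : ℤ)) := by
  obtain ⟨x, hx⟩ := hdebt
  set c : ℤ := ∑ j, |x j| with hc
  set z : Fin n → ℤ := fun j => c - x j with hzdef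
  have hznn : ∀ j, 0 ≤ z j := by
    intro j
    have h1 : x j ≤ |x j| := le_abs_self _
    have h2 : |x j| ≤ c := Finset.single_le_sum (fun k _ => abs_nonneg (x k))
      (Finset.mem_univ j)
    simp [hzdef]; omega
  set B : Fin n → ℤ := fun i => C i + (G.degree i : ℤ) with hBdef
  have hB : ∀ i, (G.degree i : ℤ) ≤ B i := fun i => by
    simp [hBdef]; exact hC i
  have hLz : (G.lapMatrix ℤ).mulVec z = C' - C := by
    have hzeq : z = (fun _ => c * 1) - x := by
      funext j; simp [hzdef]
    rw [hzeq, Matrix.mulVec_sub, hx]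
    have hconst : (G.lapMatrix ℤ).mulVec (fun _ => c * 1) = 0 := by
      have h1 : (fun _ : Fin n => c * 1) = c • (fun _ : Fin n => (1:ℤ)) := by
        funext j; simp
      rw [h1, Matrix.mulVec_smul, SimpleGraph.lapMatrix_mulVec_const_eq_zero]
      simp
    rw [hconst]
    funext j; simp [Pi.sub_apply]
  have heq : (fun i => C' i + (G.degree i : ℤ)) = B + (G.lapMatrix ℤ).mulVec z := by
    funext i
    rw [hLz]
    simp [hBdef]
    ring
  rw [heq]
  exact key_reach G B hB _ z hznn rfl
end
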